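/- Let p be a prime and let e be the entry point of the Fibonacci sequence modulo p. Then R_n^(4e) ≡ I_n (mod p). -/

import Mathlib

/-!
`R_n` is the matrix of the substitution `(x, y) ↦ (x + y, x)` acting on binary forms of degree
`n - 1`, i.e. the image of the Fibonacci matrix `Q = !![1, 1; 1, 0]` under a multiplicative map
`2 × 2` matrices → `n × n` matrices. If `p ∣ F_e` then `Q^e = !![F_{e+1}, F_e; F_e, F_{e-1}]` is the
scalar `F_{e-1}` mod `p`, and taking determinants gives `F_{e-1}^2 = (-1)^e`; hence `Q^(4e) ≡ 1`,
and so `R_n^(4e) ≡ 1`.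
-/

/-- `R n` over `ZMod p`: the `n × n` matrix whose 1-based `(i,j)` entry is `C(i-1, n-j)`. -/
def RmatMod (p n : ℕ) : Matrix (Fin n) (Fin n) (ZMod p) :=
  Matrix.of fun i j => (Nat.choose i.1 (n - 1 - j.1) : ZMod p)

open Polynomial Finset Matrix

section Homogenization

variable {K : Type*} [CommRing K]

/-- For `u = aX + b`, `v = cX + d`, this is `(cX + d)^m f((aX + b)/(cX + d))` when `deg f ≤ m`. -/
noncomputable def homog (m : ℕ) (u v : K[X]) : K[X] →ₗ[K] K[X] where
  toFun f := ∑ i ∈ range (m + 1), f.coeff i • (u ^ i * v ^ (m - i))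
  map_add' f g := by simp only [coeff_add, add_smul, sum_add_distrib]
  map_smul' c f := by simp only [coeff_smul, smul_eq_mul, mul_smul, smul_sum, RingHom.id_apply]

lemma coeff_homog (m : ℕ) (u v f : K[X]) (j : ℕ) :
    (homog m u v f).coeff j = ∑ i ∈ range (m + 1), f.coeff i * (u ^ i * v ^ (m - i)).coeff j := by
  simp [homog, finsetSum_coeff]

lemma homog_monomial {m k : ℕ} (hk : k ≤ m) (c : K) (u v : K[X]) :
    homog m u v (monomial k c) = c • (u ^ k * v ^ (m - k)) := by
  simp [homog, coeff_monomial, Nat.lt_succ_of_le hk]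

lemma homog_one_linear (a b : K) (u v : K[X]) :
    homog 1 u v (C a * X + C b) = C a * u + C b * v := by
  simp [homog, sum_range_succ, coeff_X, coeff_C, smul_eq_C_mul, add_comm]

lemma homog_mul {m₁ m₂ : ℕ} {f g : K[X]} (hf : f.natDegree ≤ m₁) (hg : g.natDegree ≤ m₂)
    (u v : K[X]) : homog (m₁ + m₂) u v (f * g) = homog m₁ u v f * homog m₂ u v g := by
  rw [as_sum_range' f (m₁ + 1) (by omega), as_sum_range' g (m₂ + 1) (by omega)]
  simp only [sum_mul_sum, map_sum, monomial_mul_monomial]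
  refine sum_congr rfl fun a ha => sum_congr rfl fun b hb => ?_
  rw [mem_range] at ha hb
  rw [homog_monomial (by omega), homog_monomial (by omega), homog_monomial (by omega),
    show m₁ + m₂ - (a + b) = (m₁ - a) + (m₂ - b) by omega]
  simp only [smul_eq_C_mul, C_mul, pow_add]
  ring

lemma homog_pow {d : ℕ} {f : K[X]} (hf : f.natDegree ≤ d) (u v : K[X]) (j : ℕ) :
    homog (j * d) u v (f ^ j) = homog d u v f ^ j := by
  induction j with
  | zero => simp [homog]
  | succ j ih =>
    rw [pow_succ, Nat.succ_mul, homog_mul (natDegree_pow_le_of_le j hf) hf, ih, pow_succ]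

end Homogenization

section SymmetricPower

variable {K : Type*} [CommRing K]

noncomputable def rowForm (A : Matrix (Fin 2) (Fin 2) K) (i : Fin 2) : K[X] :=
  C (A i 0) * X + C (A i 1)

lemma natDegree_rowForm_le (A : Matrix (Fin 2) (Fin 2) K) (i : Fin 2) :
    (rowForm A i).natDegree ≤ 1 :=
  natDegree_linear_le

lemma homog_one_rowForm (A B : Matrix (Fin 2) (Fin 2) K) (i : Fin 2) :
    homog 1 (rowForm B 0) (rowForm B 1) (rowForm A i) = rowForm (A * B) i := by
  simp only [rowForm]
  rw [homog_one_linear]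
  simp only [mul_apply, Fin.sum_univ_two, map_add, map_mul]
  ring

lemma homog_rowForm_pow_mul_pow (A B : Matrix (Fin 2) (Fin 2) K) (j k : ℕ) :
    homog (j + k) (rowForm B 0) (rowForm B 1) (rowForm A 0 ^ j * rowForm A 1 ^ k) =
      rowForm (A * B) 0 ^ j * rowForm (A * B) 1 ^ k := by
  have hdeg (i : Fin 2) (l : ℕ) : (rowForm A i ^ l).natDegree ≤ l := by
    simpa using natDegree_pow_le_of_le l (natDegree_rowForm_le A i)
  have hpow (i : Fin 2) (l : ℕ) :=
    homog_pow (natDegree_rowForm_le A i) (rowForm B 0) (rowForm B 1) l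
  simp only [mul_one] at hpow
  rw [homog_mul (hdeg 0 j) (hdeg 1 k), hpow, hpow, homog_one_rowForm, homog_one_rowForm]

/-- The action of `(x, y) ↦ (A₀₀x + A₀₁y, A₁₀x + A₁₁y)` on binary forms of degree `n - 1`
(dehomogenized at `y = 1`): row `i` is the image of `x^i y^(n-1-i)`. -/
noncomputable def symPowMatrix (n : ℕ) :
    Matrix (Fin 2) (Fin 2) K →* Matrix (Fin n) (Fin n) K where
  toFun A := of fun i j => (rowForm A 0 ^ i.1 * rowForm A 1 ^ (n - 1 - i.1)).coeff j
  map_one' := by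
    ext i j
    simp [rowForm, coeff_X_pow, one_apply, Fin.ext_iff, eq_comm]
  map_mul' A B := by
    ext i j
    have hi := i.2
    have hn : n - 1 + 1 = n := by omega
    rw [of_apply, ← homog_rowForm_pow_mul_pow, Nat.add_sub_of_le (by omega), coeff_homog, hn,
      mul_apply, ← Fin.sum_univ_eq_sum_range]
    rfl

end SymmetricPower

section Fibonacci

variable {K : Type*} [CommRing K]

variable (K) in
def fibMatrix : Matrix (Fin 2) (Fin 2) K := !![1, 1; 1, 0]

lemma fibMatrix_pow_succ (m : ℕ) : fibMatrix K ^ (m + 1) =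
    !![(Nat.fib (m + 2) : K), Nat.fib (m + 1); Nat.fib (m + 1), Nat.fib m] := by
  induction m with
  | zero => simp [fibMatrix]
  | succ m ih =>
    rw [pow_succ, ih, fibMatrix, mul_fin_two, Nat.fib_add_two (n := m + 1),
      Nat.fib_add_two (n := m)]
    push_cast
    ring_nf

lemma det_fibMatrix : (fibMatrix K).det = -1 := by
  simp [fibMatrix, det_fin_two_of]

lemma fibMatrix_pow_eq_smul_one {m : ℕ} (h : (Nat.fib (m + 1) : K) = 0) :
    fibMatrix K ^ (m + 1) = (Nat.fib m : K) • 1 := by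
  rw [fibMatrix_pow_succ, Nat.fib_add_two, Nat.cast_add, h, add_zero, smul_one_eq_diagonal,
    diagonal_fin_two]

lemma fibMatrix_pow_four_mul_eq_one {e : ℕ} (h : (Nat.fib e : K) = 0) :
    fibMatrix K ^ (4 * e) = 1 := by
  obtain _ | m := e
  · simp
  have hscalar := fibMatrix_pow_eq_smul_one h
  have hsq : (Nat.fib m : K) ^ 2 = (-1) ^ (m + 1) := by
    simpa [det_pow, det_fibMatrix, det_smul, sq, eq_comm] using congrArg det hscalar
  have hfourth : (Nat.fib m : K) ^ 4 = 1 := by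
    rw [show 4 = 2 * 2 from rfl, pow_mul, hsq, ← pow_mul, mul_comm, pow_mul]
    simp
  rw [mul_comm, pow_mul, hscalar, _root_.smul_pow, hfourth, one_pow, one_smul]

end Fibonacci

lemma RmatMod_eq_symPowMatrix (p n : ℕ) :
    RmatMod p n = symPowMatrix n (fibMatrix (ZMod p)) := by
  ext i j
  have hrow0 : rowForm (fibMatrix (ZMod p)) 0 = X + 1 := by simp [rowForm, fibMatrix]
  have hrow1 : rowForm (fibMatrix (ZMod p)) 1 = X := by simp [rowForm, fibMatrix]
  simp only [symPowMatrix, MonoidHom.coe_mk, OneHom.coe_mk, of_apply, RmatMod, hrow0, hrow1,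
    coeff_mul_X_pow', coeff_X_add_one_pow]
  split_ifs with h
  · rw [Nat.choose_symm_of_eq_add (show i.1 = (n - 1 - j.1) + (j.1 - (n - 1 - i.1)) by omega)]
  · rw [Nat.choose_eq_zero_of_lt (by omega), Nat.cast_zero]

theorem Rmat_pow_four_entry_point (p n e : ℕ) (hdvd : p ∣ Nat.fib e) :
    RmatMod p n ^ (4 * e) = 1 := by
  rw [RmatMod_eq_symPowMatrix, ← map_pow,
    fibMatrix_pow_four_mul_eq_one ((ZMod.natCast_eq_zero_iff _ _).mpr hdvd), map_one]
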